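/- The smallest pole ⫫ = {p : {p} ⊳ ∅} equals the union of the stratification ⫫₀ = ∅, ⫫_{r+1} = {p : ∃ Q ⊆ ⫫_r, {p} ⊳₁ Q}, where ⊳ is the smallest evaluation relation containing a generating relation ⊳₁ with singleton finite left-hand sides and finite right-hand sides. -/

import Mathlib

/-! Each stratum consists of processes `p` with `{p} ⊳ ∅`: the finitely many elements of a
right-hand side of `⊳₁` are cut away one at a time. Conversely `U = ⋃ r, ⫫_r` is a pole closed
under `⊳₁`, since a finite subset of an increasing union lies in a single stratum. Hence
"`Q ⊆ U` implies that `P` meets `U`" is an evaluation relation containing `⊳₁`, so it contains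
`⊳`; this puts `U` in the generated structure and gives `{p} ⊳ ∅ → p ∈ U`. Finally every pole
of that structure contains each `p` with `{p} ⊳ ∅`. -/

variable {Proc : Type*}

/-- A multi-evaluation relation over a one-step relation `step`. -/
def IsEvalRel (step : Proc → Proc → Prop) (R : Set Proc → Set Proc → Prop) : Prop :=
  (∀ p q : Proc, step p q → R {p} {q}) ∧
  (∀ p : Proc, R {p} {p}) ∧
  (∀ (P Q P' Q' : Set Proc) (r : Proc),
    R P (Q ∪ {r}) → R (P' ∪ {r}) Q' → R (P ∪ P') (Q ∪ Q')) ∧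
  (∀ P Q P' Q' : Set Proc, R P Q → P ⊆ P' → Q ⊆ Q' → R P' Q')

/-- A pole: a set of processes closed by anti-evaluation. -/
def IsPole (step : Proc → Proc → Prop) (po : Set Proc) : Prop :=
  ∀ p q : Proc, Relation.ReflTransGen step p q → q ∈ po → p ∈ po

/-- The multi-evaluation relation associated with a realizability structure `S`. -/
def relOf (S : Set (Set Proc)) (P Q : Set Proc) : Prop :=
  ∀ po ∈ S, Q ⊆ po → (P ∩ po).Nonempty

/-- The realizability structure generated by a relation `R`. -/
def genStruct (step : Proc → Proc → Prop) (R : Set Proc → Set Proc → Prop) :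
    Set (Set Proc) :=
  {po | IsPole step po ∧ ∀ P Q : Set Proc, R P Q → Q ⊆ po → (P ∩ po).Nonempty}

/-- The stratification `⫫₀ = ∅`, `⫫_{r+1} = {p | ∃ Q ⊆ ⫫_r, {p} ⊳₁ Q}`. -/
def strat {Proc : Type*} (R₁ : Set Proc → Set Proc → Prop) : ℕ → Set Proc
  | 0 => ∅
  | r + 1 => {p | ∃ Q : Set Proc, Q ⊆ strat R₁ r ∧ R₁ {p} Q}

namespace IsEvalRel

variable {step : Proc → Proc → Prop} {R : Set Proc → Set Proc → Prop}

theorem cut_of_finite (hR : IsEvalRel step R) {Q : Set Proc} (hQ : Q.Finite) :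
    ∀ {P : Set Proc}, R P Q → (∀ q ∈ Q, R {q} ∅) → R P ∅ := by
  induction Q, hQ using Set.Finite.induction_on with
  | empty => exact fun hPQ _ => hPQ
  | @insert a s _ _ ih =>
    intro P hPQ hQ
    rw [Set.insert_eq, Set.union_comm] at hPQ
    have ha : R (∅ ∪ {a}) ∅ := by simpa using hQ a (Set.mem_insert a s)
    have hPs : R P s := by simpa using hR.2.2.1 P s ∅ ∅ a hPQ ha
    exact ih hPs fun q hq => hQ q (Set.mem_insert_of_mem a hq)

end IsEvalRel

theorem isPole_of_step {step : Proc → Proc → Prop} {po : Set Proc}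
    (h : ∀ p q, step p q → q ∈ po → p ∈ po) : IsPole step po := by
  intro p q hpq hq
  induction hpq using Relation.ReflTransGen.head_induction_on with
  | refl => exact hq
  | head hstep _ ih => exact h _ _ hstep ih

theorem relOf_singleton {po P Q : Set Proc} :
    relOf {po} P Q ↔ (Q ⊆ po → (P ∩ po).Nonempty) := by
  simp [relOf]

theorem isEvalRel_relOf {step : Proc → Proc → Prop} {S : Set (Set Proc)}
    (hS : ∀ po ∈ S, IsPole step po) : IsEvalRel step (relOf S) := by
  refine ⟨?_, ?_, ?_, ?_⟩
  · intro p q hpq po hpo hq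
    exact ⟨p, rfl, hS po hpo p q (.single hpq) (hq rfl)⟩
  · exact fun p po _ hp => ⟨p, rfl, hp rfl⟩
  · intro P Q P' Q' r hPQ hP'Q' po hpo hQQ'
    obtain ⟨x, hx | rfl, hxpo⟩ := hP'Q' po hpo (Set.subset_union_right.trans hQQ')
    · exact ⟨x, Or.inr hx, hxpo⟩
    · obtain ⟨y, hy, hypo⟩ := hPQ po hpo
        (Set.union_subset (Set.subset_union_left.trans hQQ') (Set.singleton_subset_iff.2 hxpo))
      exact ⟨y, Or.inl hy, hypo⟩
  · intro P Q P' Q' hPQ hP hQ po hpo hQ'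
    obtain ⟨x, hx, hxpo⟩ := hPQ po hpo (hQ.trans hQ')
    exact ⟨x, hP hx, hxpo⟩

theorem mem_of_mem_genStruct {step : Proc → Proc → Prop} {R : Set Proc → Set Proc → Prop}
    {po : Set Proc} (hpo : po ∈ genStruct step R) {p : Proc} (hp : R {p} ∅) : p ∈ po := by
  obtain ⟨x, rfl, hx⟩ := hpo.2 {p} ∅ hp (Set.empty_subset po)
  exact hx

section strat

variable {R₁ : Set Proc → Set Proc → Prop}

theorem monotone_strat : Monotone (strat R₁) := by
  refine monotone_nat_of_le_succ fun r => ?_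
  induction r with
  | zero => simp [strat]
  | succ r ih =>
    rintro p ⟨Q, hQ, hpQ⟩
    exact ⟨Q, hQ.trans ih, hpQ⟩

theorem mem_iUnion_strat {p : Proc} {Q : Set Proc} (hQ : Q.Finite)
    (hQU : Q ⊆ ⋃ r, strat R₁ r) (hpQ : R₁ {p} Q) : p ∈ ⋃ r, strat R₁ r := by
  rw [← hQ.coe_toFinset] at hQU
  obtain ⟨r, hr⟩ := monotone_strat.directed_le.exists_mem_subset_of_finset_subset_biUnion hQU
  exact Set.mem_iUnion.2 ⟨r + 1, Q, by simpa using hr, hpQ⟩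

theorem isPole_iUnion_strat {step : Proc → Proc → Prop}
    (hstep : ∀ p q, step p q → R₁ {p} {q}) : IsPole step (⋃ r, strat R₁ r) :=
  isPole_of_step fun p q hpq hq =>
    mem_iUnion_strat (Set.finite_singleton q) (Set.singleton_subset_iff.2 hq) (hstep p q hpq)

theorem strat_subset_of_isEvalRel {step : Proc → Proc → Prop} {R : Set Proc → Set Proc → Prop}
    (hR : IsEvalRel step R) (hR₁ : ∀ P Q, R₁ P Q → R P Q)
    (hfin : ∀ P Q, R₁ P Q → Q.Finite) (r : ℕ) : strat R₁ r ⊆ {p | R {p} ∅} := by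
  induction r with
  | zero => exact Set.empty_subset _
  | succ r ih =>
    rintro p ⟨Q, hQ, hpQ⟩
    exact hR.cut_of_finite (hfin _ _ hpQ) (hR₁ _ _ hpQ) fun q hq => ih (hQ hq)

end strat

theorem stmt_14_general {Proc : Type*} (step : Proc → Proc → Prop)
    (R₁ Rstar : Set Proc → Set Proc → Prop)
    (hstep : ∀ p q : Proc, step p q → R₁ {p} {q})
    (hfin : ∀ P Q : Set Proc, R₁ P Q → (∃ p : Proc, P = {p}) ∧ Q.Finite)
    (h₁ : IsEvalRel step Rstar) (h₂ : ∀ P Q, R₁ P Q → Rstar P Q)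
    (h₃ : ∀ R' : Set Proc → Set Proc → Prop, IsEvalRel step R' →
      (∀ P Q, R₁ P Q → R' P Q) → ∀ P Q, Rstar P Q → R' P Q) :
    (⋃ r, strat R₁ r) ∈ genStruct step Rstar ∧
      (∀ po ∈ genStruct step Rstar, (⋃ r, strat R₁ r) ⊆ po) ∧
      (⋃ r, strat R₁ r) = {p : Proc | Rstar {p} ∅} := by
  set U := ⋃ r, strat R₁ r
  have hpole : IsPole step U := isPole_iUnion_strat hstep
  have hRstar : ∀ P Q, Rstar P Q → Q ⊆ U → (P ∩ U).Nonempty := by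
    refine fun P Q h => relOf_singleton.1 (h₃ _ (isEvalRel_relOf ?_) ?_ P Q h)
    · simpa using hpole
    · rintro P Q hPQ
      obtain ⟨⟨p, rfl⟩, hQ⟩ := hfin P Q hPQ
      exact relOf_singleton.2 fun hQU => ⟨p, rfl, mem_iUnion_strat hQ hQU hPQ⟩
  have hU : U ∈ genStruct step Rstar := ⟨hpole, hRstar⟩
  have hann : U ⊆ {p | Rstar {p} ∅} :=
    Set.iUnion_subset (strat_subset_of_isEvalRel h₁ h₂ fun P Q h => (hfin P Q h).2)
  exact ⟨hU, fun po hpo p hp => mem_of_mem_genStruct hpo (hann hp),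
    hann.antisymm fun p hp => mem_of_mem_genStruct hU hp⟩

/-- The smallest pole `{p | {p} ⊳ ∅}` equals the union of the stratification: it is a
pole of the structure generated by `⊳`, is contained in every pole of that structure,
and coincides with `⋃ r, ⫫_r`. -/
theorem stmt_14 {Proc : Type*} (step : Proc → Proc → Prop)
    (hdet : ∀ p q q' : Proc, step p q → step p q' → q = q')
    (R₁ Rstar : Set Proc → Set Proc → Prop)
    (hstep : ∀ p q : Proc, step p q → R₁ {p} {q})
    (hfin : ∀ P Q : Set Proc, R₁ P Q → (∃ p : Proc, P = {p}) ∧ Q.Finite)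
    (h₁ : IsEvalRel step Rstar) (h₂ : ∀ P Q, R₁ P Q → Rstar P Q)
    (h₃ : ∀ R' : Set Proc → Set Proc → Prop, IsEvalRel step R' →
      (∀ P Q, R₁ P Q → R' P Q) → ∀ P Q, Rstar P Q → R' P Q) :
    (⋃ r, strat R₁ r) ∈ genStruct step Rstar ∧
      (∀ po ∈ genStruct step Rstar, (⋃ r, strat R₁ r) ⊆ po) ∧
      (⋃ r, strat R₁ r) = {p : Proc | Rstar {p} ∅} :=
  stmt_14_general step R₁ Rstar hstep hfin h₁ h₂ h₃
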